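/- Let n = n₁ + n₂ with n₁, n₂ ≥ 2 and let ξ_{n₁n₂} be the 2-order Gray code map. Then Σ_{i=1}^{2^{n₁−1}} θ(n, ξ_{n₁n₂}^{-1}(F_i^{n₁} × N_{2^{n₂}})) = 2^{n−n₁}(3·2^{2n₁−3} − 2^{n₁−1}), where F_i^{n₁} = {i,...,i+2^{n₁−1}−1} and N_{2^{n₂}} = {1,...,2^{n₂}}. -/

import Mathlib

open Finset

/-- Number of coordinates in which two 0-1 vectors differ. -/
def diffCount {n : ℕ} (u v : Fin n → Bool) : ℕ :=
  (Finset.univ.filter fun i => u i ≠ v i).card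

/-- Adjacency in the hypercube `Q_n`: differ in exactly one coordinate. -/
def cubeAdj {n : ℕ} (u v : Fin n → Bool) : Prop := diffCount u v = 1

instance {n : ℕ} (u v : Fin n → Bool) : Decidable (cubeAdj u v) :=
  inferInstanceAs (Decidable (diffCount u v = 1))

/-- `theta n S`: number of edges of `Q_n` with exactly one endpoint in `S`. -/
def theta (n : ℕ) (S : Finset (Fin n → Bool)) : ℕ :=
  ((Finset.univ ×ˢ Finset.univ).filter fun p : (Fin n → Bool) × (Fin n → Bool) =>
    p.1 ∈ S ∧ p.2 ∉ S ∧ cubeAdj p.1 p.2).card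

/-- The reflected Gray code map `ξ_n : {0,1}^n → {1,...,2^n}`. -/
def gray : (n : ℕ) → (Fin n → Bool) → ℕ
  | 0, _ => 1
  | n + 1, v =>
    if v 0 = false then gray n (fun i => v i.succ)
    else 2 ^ (n + 1) + 1 - gray n (fun i => v i.succ)

/-- Wirelength of an embedding `f` of `Q_n` into a host with distance `d`. -/
def wirelength {n : ℕ} {α : Type*} (d : α → α → ℕ) (f : (Fin n → Bool) → α) : ℕ :=
  (∑ u : Fin n → Bool, ∑ v : Fin n → Bool, if cubeAdj u v then d (f u) (f v) else 0) / 2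

/-- Cyclic distance on the cycle with `m` vertices labeled `1,...,m`. -/
def cycDist (m a b : ℕ) : ℕ := min (Nat.dist a b) (m - Nat.dist a b)

/-- The 2-order Gray code map. -/
def gray2 (n₁ n₂ : ℕ) (v : Fin (n₁ + n₂) → Bool) : ℕ × ℕ :=
  (gray n₁ fun i => v (Fin.castAdd n₂ i), gray n₂ fun i => v (Fin.natAdd n₁ i))


/-!
Each set `ξ⁻¹(F_i × N_{2^{n₂}})` is cut out by the first `n₁` coordinates, so only edges along
those coordinates leave it, and every edge of `Q_{n₁}` occurs in `2^{n₂}` parallel copies.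
With `h = 2^{n₁-1}`, two labels `a, b ∈ {1, …, 2h}` are separated by exactly `cycDist (2h) a b`
of the windows `{i, …, i+h-1}`, `1 ≤ i ≤ h`, counting both orientations. Hence twice the sum is
`2^{n₂}` times the wirelength of the Gray code embedding of `Q_{n₁}` into the cycle on `2^{n₁}`
vertices. The reflection `ξ_{n+1}(1w) = 2^{n+1} + 1 - ξ_n(w)` splits `Q_{n+1}` into two copies
of `Q_n`, mapped onto the two halves of the cycle, joined by a perfect matching; this gives the
path wirelength `4^n - 2^n` (edges counted in both directions) and then the cycle wirelength
`3·4^{n₁-1} - 2^{n₁}`.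
-/

section Hypercube

variable {n : ℕ}

lemma diffCount_eq_zero_iff {u v : Fin n → Bool} : diffCount u v = 0 ↔ u = v := by
  simp [diffCount, filter_eq_empty_iff, funext_iff]

lemma diffCount_comm (u v : Fin n → Bool) : diffCount u v = diffCount v u := by
  simp only [diffCount, ne_comm]

lemma cubeAdj_comm {u v : Fin n → Bool} : cubeAdj u v ↔ cubeAdj v u := by
  rw [cubeAdj, cubeAdj, diffCount_comm]

lemma diffCount_cons (b b' : Bool) (w w' : Fin n → Bool) :
    diffCount (Fin.cons b w) (Fin.cons b' w') = (if b = b' then 0 else 1) + diffCount w w' := by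
  simp only [diffCount, card_filter, Fin.sum_univ_succ, Fin.cons_zero, Fin.cons_succ]
  split <;> simp_all

lemma cubeAdj_cons_iff {b b' : Bool} {w w' : Fin n → Bool} :
    cubeAdj (Fin.cons b w) (Fin.cons b' w') ↔ (b = b' ∧ cubeAdj w w') ∨ (b ≠ b' ∧ w = w') := by
  simp only [cubeAdj, diffCount_cons, ← diffCount_eq_zero_iff (u := w)]
  split <;> simp_all

lemma diffCount_append {n₁ n₂ : ℕ} (x x' : Fin n₁ → Bool) (y y' : Fin n₂ → Bool) :
    diffCount (Fin.append x y) (Fin.append x' y') = diffCount x x' + diffCount y y' := by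
  simp only [diffCount, card_filter, Fin.sum_univ_add, Fin.append_left, Fin.append_right]

lemma cubeAdj_append_iff {n₁ n₂ : ℕ} {x x' : Fin n₁ → Bool} {y y' : Fin n₂ → Bool} :
    cubeAdj (Fin.append x y) (Fin.append x' y') ↔
      (cubeAdj x x' ∧ y = y') ∨ (x = x' ∧ cubeAdj y y') := by
  simp only [cubeAdj, diffCount_append, ← diffCount_eq_zero_iff (u := x),
    ← diffCount_eq_zero_iff (u := y)]
  omega

lemma cubeAdj.ne {u v : Fin n → Bool} (h : cubeAdj u v) : u ≠ v := by
  rintro rfl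
  simp [cubeAdj, diffCount] at h

end Hypercube

lemma Fin.sum_fun_cons {α M : Type*} [Fintype α] [AddCommMonoid M] {n : ℕ}
    (F : (Fin (n + 1) → α) → M) :
    ∑ v, F v = ∑ a, ∑ w, F (Fin.cons a w) := by
  rw [← Fintype.sum_prod_type']
  exact (Fintype.sum_equiv (Fin.consEquiv fun _ => α) _ _ fun _ => rfl).symm

lemma Fin.sum_fun_append {α M : Type*} [Fintype α] [AddCommMonoid M] {n₁ n₂ : ℕ}
    (F : (Fin (n₁ + n₂) → α) → M) :
    ∑ v, F v = ∑ x, ∑ y, F (Fin.append x y) := by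
  rw [← Fintype.sum_prod_type']
  exact (Fintype.sum_equiv (Fin.appendEquiv n₁ n₂) _ _ fun _ => rfl).symm

/-- Every edge of `Q_n` is counted in both directions. -/
def cubeEdgeSum (n : ℕ) (T : (Fin n → Bool) → (Fin n → Bool) → ℕ) : ℕ :=
  ∑ u, ∑ v, if cubeAdj u v then T u v else 0

section CubeEdgeSum

variable {n : ℕ}

lemma cubeEdgeSum_add (T S : (Fin n → Bool) → (Fin n → Bool) → ℕ) :
    cubeEdgeSum n (fun u v => T u v + S u v) = cubeEdgeSum n T + cubeEdgeSum n S := by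
  simp only [cubeEdgeSum, ← sum_add_distrib, ite_add_zero]

lemma cubeEdgeSum_swap (T : (Fin n → Bool) → (Fin n → Bool) → ℕ) :
    cubeEdgeSum n (fun u v => T v u) = cubeEdgeSum n T := by
  rw [cubeEdgeSum, sum_comm]
  simp only [cubeAdj_comm (u := _)]
  rfl

lemma sum_cubeEdgeSum {ι : Type*} (s : Finset ι)
    (T : ι → (Fin n → Bool) → (Fin n → Bool) → ℕ) :
    ∑ i ∈ s, cubeEdgeSum n (T i) = cubeEdgeSum n fun u v => ∑ i ∈ s, T i u v := by
  simp only [cubeEdgeSum, ite_sum_zero]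
  rw [sum_comm]
  exact sum_congr rfl fun u _ => sum_comm

lemma theta_eq_cubeEdgeSum (S : Finset (Fin n → Bool)) :
    theta n S = cubeEdgeSum n fun u v => if u ∈ S ∧ v ∉ S then 1 else 0 := by
  rw [theta, card_filter, sum_product, cubeEdgeSum]
  simp only [← and_assoc, and_comm (b := cubeAdj _ _), ite_and]

lemma cubeEdgeSum_succ (T : (Fin (n + 1) → Bool) → (Fin (n + 1) → Bool) → ℕ) :
    cubeEdgeSum (n + 1) T =
      cubeEdgeSum n (fun w w' => T (Fin.cons false w) (Fin.cons false w')) +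
      cubeEdgeSum n (fun w w' => T (Fin.cons true w) (Fin.cons true w')) +
      ∑ w, (T (Fin.cons false w) (Fin.cons true w) + T (Fin.cons true w) (Fin.cons false w)) := by
  have inner : ∀ b w, (∑ v, if cubeAdj (Fin.cons b w) v then T (Fin.cons b w) v else 0) =
      (∑ w', if cubeAdj w w' then T (Fin.cons b w) (Fin.cons b w') else 0) +
        T (Fin.cons b w) (Fin.cons (!b) w) := by
    intro b w
    rw [Fin.sum_fun_cons, Fintype.sum_bool]
    cases b <;> simp [cubeAdj_cons_iff, add_comm]
  rw [cubeEdgeSum, Fin.sum_fun_cons, Fintype.sum_bool]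
  simp only [inner, sum_add_distrib, cubeEdgeSum, Bool.not_true, Bool.not_false]
  abel

end CubeEdgeSum

lemma cubeEdgeSum_append {n₁ n₂ : ℕ}
    (T : (Fin (n₁ + n₂) → Bool) → (Fin (n₁ + n₂) → Bool) → ℕ) :
    cubeEdgeSum (n₁ + n₂) T =
      ∑ y, cubeEdgeSum n₁ (fun x x' => T (Fin.append x y) (Fin.append x' y)) +
      ∑ x, cubeEdgeSum n₂ (fun y y' => T (Fin.append x y) (Fin.append x y')) := by
  have inner : ∀ x y, (∑ v, if cubeAdj (Fin.append x y) v then T (Fin.append x y) v else 0) =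
      (∑ x', if cubeAdj x x' then T (Fin.append x y) (Fin.append x' y) else 0) +
        ∑ y', if cubeAdj y y' then T (Fin.append x y) (Fin.append x y') else 0 := by
    intro x y
    rw [Fin.sum_fun_append]
    have hsplit : ∀ x' y', (if cubeAdj (Fin.append x y) (Fin.append x' y') then
        T (Fin.append x y) (Fin.append x' y') else 0) =
        (if cubeAdj x x' ∧ y = y' then T (Fin.append x y) (Fin.append x' y') else 0) +
          if x = x' ∧ cubeAdj y y' then T (Fin.append x y) (Fin.append x' y') else 0 := by
      intro x' y'
      have := @cubeAdj.ne _ x x'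
      simp only [cubeAdj_append_iff]
      split_ifs <;> simp_all
    simp only [hsplit, sum_add_distrib]
    rw [sum_comm (f := fun x' y' => if x = x' ∧ _ then _ else _)]
    simp [ite_and]
  rw [cubeEdgeSum, Fin.sum_fun_append]
  simp only [inner, sum_add_distrib, cubeEdgeSum]
  rw [sum_comm]

lemma cubeEdgeSum_comp_castAdd {n₁ n₂ : ℕ} (T : (Fin n₁ → Bool) → (Fin n₁ → Bool) → ℕ)
    (hT : ∀ x, T x x = 0) :
    cubeEdgeSum (n₁ + n₂)
        (fun u v => T (fun i => u (Fin.castAdd n₂ i)) (fun i => v (Fin.castAdd n₂ i))) =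
      2 ^ n₂ * cubeEdgeSum n₁ T := by
  rw [cubeEdgeSum_append]
  simp [cubeEdgeSum, Fin.append_left, hT]

lemma gray_cons {n : ℕ} (b : Bool) (w : Fin n → Bool) :
    gray (n + 1) (Fin.cons b w) = if b then 2 ^ (n + 1) + 1 - gray n w else gray n w := by
  cases b <;> simp [gray]

lemma gray_mem_Icc : ∀ {n : ℕ} (v : Fin n → Bool), gray n v ∈ Icc 1 (2 ^ n)
  | 0, _ => by simp [gray]
  | n + 1, v => by
    have := mem_Icc.1 (gray_mem_Icc (Fin.tail v))
    rw [← Fin.cons_self_tail v, gray_cons, mem_Icc, pow_succ]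
    split <;> omega

lemma gray_injective : ∀ n, Function.Injective (gray n)
  | 0 => fun u v _ => Subsingleton.elim u v
  | n + 1 => by
    intro u v h
    rw [← Fin.cons_self_tail u, ← Fin.cons_self_tail v] at h ⊢
    have hu := mem_Icc.1 (gray_mem_Icc (Fin.tail u))
    have hv := mem_Icc.1 (gray_mem_Icc (Fin.tail v))
    rw [gray_cons, gray_cons, pow_succ] at h
    have := gray_injective n (a₁ := Fin.tail u) (a₂ := Fin.tail v)
    generalize u 0 = b at h ⊢
    generalize v 0 = b' at h ⊢
    cases b <;> cases b' <;> simp at h <;> first | omega | rw [this (by omega)]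

lemma image_gray (n : ℕ) : univ.image (gray n) = Icc 1 (2 ^ n) :=
  eq_of_subset_of_card_le (image_subset_iff.2 fun v _ => gray_mem_Icc v) <| by
    simp [card_image_of_injective _ (gray_injective n)]

lemma sum_gray {n : ℕ} {M : Type*} [AddCommMonoid M] (F : ℕ → M) :
    ∑ v, F (gray n v) = ∑ k ∈ range (2 ^ n), F (k + 1) := by
  rw [← sum_image fun u _ v _ h => gray_injective n h, image_gray n, range_eq_Ico,
    sum_Ico_add' F 0 (2 ^ n) 1]
  rfl

lemma sum_range_two_mul_add_one (m : ℕ) : ∑ k ∈ range m, (2 * k + 1) = m ^ 2 := by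
  induction m with
  | zero => simp
  | succ m ih => rw [sum_range_succ, ih]; ring

lemma sum_range_min_two_mul_add_one (m : ℕ) :
    ∑ k ∈ range (2 * m), min (2 * k + 1) (4 * m - 1 - 2 * k) = 2 * m ^ 2 := by
  have hlow : ∑ k ∈ range m, min (2 * k + 1) (4 * m - 1 - 2 * k) = ∑ k ∈ range m, (2 * k + 1) :=
    sum_congr rfl fun k hk => by have := mem_range.1 hk; omega
  have hhigh : ∑ k ∈ range m, min (2 * (m + k) + 1) (4 * m - 1 - 2 * (m + k)) =
      ∑ k ∈ range m, (2 * (m - 1 - k) + 1) :=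
    sum_congr rfl fun k hk => by have := mem_range.1 hk; omega
  rw [two_mul, sum_range_add, hlow, hhigh, sum_range_reflect (fun k => 2 * k + 1),
    sum_range_two_mul_add_one]
  ring

lemma cubeEdgeSum_dist_gray (n : ℕ) :
    cubeEdgeSum n (fun u v => Nat.dist (gray n u) (gray n v)) + 2 ^ n = 4 ^ n := by
  induction n with
  | zero => simp [cubeEdgeSum, cubeAdj, diffCount]
  | succ n ih =>
    have hhalf : ∀ b, cubeEdgeSum n (fun w w' =>
        Nat.dist (gray (n + 1) (Fin.cons b w)) (gray (n + 1) (Fin.cons b w'))) =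
        cubeEdgeSum n (fun w w' => Nat.dist (gray n w) (gray n w')) := by
      intro b
      congr; funext w w'
      have := mem_Icc.1 (gray_mem_Icc w); have := mem_Icc.1 (gray_mem_Icc w')
      rw [gray_cons, gray_cons, pow_succ]
      simp only [Nat.dist]
      split <;> omega
    have hcross : ∑ w, (Nat.dist (gray (n + 1) (Fin.cons false w)) (gray (n + 1) (Fin.cons true w)) +
        Nat.dist (gray (n + 1) (Fin.cons true w)) (gray (n + 1) (Fin.cons false w))) =
        2 * 4 ^ n := by
      calc _ = 2 * ∑ w, (2 * (2 ^ n - gray n w) + 1) := by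
            rw [mul_sum]
            refine sum_congr rfl fun w _ => ?_
            have := mem_Icc.1 (gray_mem_Icc w)
            rw [gray_cons, gray_cons, pow_succ]
            simp only [Nat.dist, if_true, Bool.false_eq_true, if_false]
            omega
        _ = 2 * ∑ k ∈ range (2 ^ n), (2 * (2 ^ n - 1 - k) + 1) := by
            rw [sum_gray (fun k => 2 * (2 ^ n - k) + 1)]
            exact congrArg _ (sum_congr rfl fun k _ => by omega)
        _ = 2 * 4 ^ n := by
            rw [sum_range_reflect (fun k => 2 * k + 1), sum_range_two_mul_add_one, ← pow_mul,
              mul_comm n, pow_mul]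
            norm_num
    rw [cubeEdgeSum_succ, hhalf, hhalf, hcross, pow_succ, pow_succ]
    omega

lemma cubeEdgeSum_cycDist_gray (n : ℕ) :
    cubeEdgeSum (n + 2) (fun u v => cycDist (2 ^ (n + 2)) (gray (n + 2) u) (gray (n + 2) v)) +
      2 ^ (n + 2) = 3 * 4 ^ (n + 1) := by
  have hhalf : ∀ b, cubeEdgeSum (n + 1) (fun w w' => cycDist (2 ^ (n + 2))
      (gray (n + 2) (Fin.cons b w)) (gray (n + 2) (Fin.cons b w'))) =
      cubeEdgeSum (n + 1) (fun w w' => Nat.dist (gray (n + 1) w) (gray (n + 1) w')) := by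
    intro b
    congr; funext w w'
    have := mem_Icc.1 (gray_mem_Icc w); have := mem_Icc.1 (gray_mem_Icc w')
    rw [gray_cons, gray_cons, pow_succ _ (n + 1)]
    simp only [cycDist, Nat.dist]
    split <;> omega
  have hcross : ∑ w, (cycDist (2 ^ (n + 2)) (gray (n + 2) (Fin.cons false w))
      (gray (n + 2) (Fin.cons true w)) + cycDist (2 ^ (n + 2)) (gray (n + 2) (Fin.cons true w))
      (gray (n + 2) (Fin.cons false w))) = 4 ^ (n + 1) := by
    calc _ = 2 * ∑ w, min (2 * gray (n + 1) w - 1) (4 * 2 ^ n + 1 - 2 * gray (n + 1) w) := by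
          rw [mul_sum]
          refine sum_congr rfl fun w _ => ?_
          have := mem_Icc.1 (gray_mem_Icc w)
          have : 2 ^ (n + 1) = 2 * 2 ^ n := by ring
          rw [gray_cons, gray_cons, pow_succ _ (n + 1)]
          simp only [cycDist, Nat.dist, if_true, Bool.false_eq_true, if_false]
          omega
      _ = 2 * ∑ k ∈ range (2 * 2 ^ n), min (2 * k + 1) (4 * 2 ^ n - 1 - 2 * k) := by
          rw [sum_gray (fun k => min (2 * k - 1) (4 * 2 ^ n + 1 - 2 * k)), pow_succ, mul_comm _ 2]
          exact congrArg _ (sum_congr rfl fun k _ => by omega)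
      _ = 4 ^ (n + 1) := by
          rw [sum_range_min_two_mul_add_one, ← pow_mul, mul_comm n, pow_mul]
          ring
  have hlin := cubeEdgeSum_dist_gray (n + 1)
  rw [cubeEdgeSum_succ, hhalf, hhalf, hcross]
  have : 2 ^ (n + 2) = 2 * 2 ^ (n + 1) := by ring
  omega

lemma card_window_add_card_window {h a b : ℕ} (ha : a ∈ Icc 1 (2 * h)) (hb : b ∈ Icc 1 (2 * h)) :
    #{i ∈ Icc 1 h | a ∈ Icc i (i + h - 1) ∧ b ∉ Icc i (i + h - 1)} +
      #{i ∈ Icc 1 h | b ∈ Icc i (i + h - 1) ∧ a ∉ Icc i (i + h - 1)} = cycDist (2 * h) a b := by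
  wlog hab : a ≤ b generalizing a b
  · rw [add_comm, this hb ha (by omega), cycDist, cycDist, Nat.dist_comm]
  rw [mem_Icc] at ha hb
  have hab_out : {i ∈ Icc 1 h | a ∈ Icc i (i + h - 1) ∧ b ∉ Icc i (i + h - 1)} =
      Icc (max 1 (a + 1 - h)) (min (min a h) (b - h)) := by
    ext i; simp only [mem_filter, mem_Icc]; omega
  have hba_out : {i ∈ Icc 1 h | b ∈ Icc i (i + h - 1) ∧ a ∉ Icc i (i + h - 1)} =
      Icc (max (a + 1) (max 1 (b + 1 - h))) (min b h) := by
    ext i; simp only [mem_filter, mem_Icc]; omega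
  rw [hab_out, hba_out, Nat.card_Icc, Nat.card_Icc, cycDist, Nat.dist]
  omega

lemma two_mul_sum_theta_window {n h : ℕ} (f : (Fin n → Bool) → ℕ)
    (hf : ∀ v, f v ∈ Icc 1 (2 * h)) :
    2 * ∑ i ∈ Icc 1 h, theta n (univ.filter fun v => f v ∈ Icc i (i + h - 1)) =
      cubeEdgeSum n fun u v => cycDist (2 * h) (f u) (f v) := by
  simp only [theta_eq_cubeEdgeSum, sum_cubeEdgeSum, mem_filter, mem_univ, true_and]
  rw [two_mul]
  nth_rw 2 [← cubeEdgeSum_swap]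
  rw [← cubeEdgeSum_add]
  congr; funext u v
  rw [← card_window_add_card_window (hf u) (hf v), card_filter, card_filter]

theorem stmt10_general (n₁ n₂ : ℕ) (h₁ : 2 ≤ n₁) :
    ∑ i ∈ Finset.Icc 1 (2 ^ (n₁ - 1)),
        theta (n₁ + n₂) (Finset.univ.filter fun v : Fin (n₁ + n₂) → Bool =>
          gray2 n₁ n₂ v ∈ (Finset.Icc i (i + 2 ^ (n₁ - 1) - 1)) ×ˢ Finset.Icc 1 (2 ^ n₂)) =
      2 ^ (n₁ + n₂ - n₁) * (3 * 2 ^ (2 * n₁ - 3) - 2 ^ (n₁ - 1)) := by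
  obtain ⟨n, rfl⟩ : ∃ n, n₁ = n + 2 := ⟨n₁ - 2, by omega⟩
  have hsets : ∀ i, (univ.filter fun v => gray2 (n + 2) n₂ v ∈
      Icc i (i + 2 ^ (n + 1) - 1) ×ˢ Icc 1 (2 ^ n₂)) =
      univ.filter fun v => gray (n + 2) (fun j => v (Fin.castAdd n₂ j)) ∈
        Icc i (i + 2 ^ (n + 1) - 1) := fun i => by
    ext v
    simp [gray2, mem_Icc.1 (gray_mem_Icc fun j => v (Fin.natAdd (n + 2) j))]
  have hsum := two_mul_sum_theta_window (h := 2 ^ (n + 1))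
    (fun v => gray (n + 2) fun j => v (Fin.castAdd n₂ j)) fun v => by
      rw [← pow_succ']; exact gray_mem_Icc _
  rw [← pow_succ', cubeEdgeSum_comp_castAdd
    (fun x y => cycDist (2 ^ (n + 2)) (gray (n + 2) x) (gray (n + 2) y)) fun x => by
      simp [cycDist]] at hsum
  have hcyc : cubeEdgeSum (n + 2) (fun x y => cycDist (2 ^ (n + 2)) (gray (n + 2) x)
      (gray (n + 2) y)) = 2 * (3 * 2 ^ (2 * n + 1) - 2 ^ (n + 1)) := by
    have hwire := cubeEdgeSum_cycDist_gray n
    rw [show 4 ^ (n + 1) = 2 * 2 ^ (2 * n + 1) by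
      rw [← pow_succ', show 2 * n + 1 + 1 = 2 * (n + 1) by ring, pow_mul]; norm_num] at hwire
    have : 2 ^ (n + 2) = 4 * 2 ^ n := by ring
    omega
  simp only [show n + 2 - 1 = n + 1 by omega, show n + 2 + n₂ - (n + 2) = n₂ by omega,
    show 2 * (n + 2) - 3 = 2 * n + 1 by omega, hsets]
  rw [hcyc, mul_left_comm] at hsum
  exact Nat.eq_of_mul_eq_mul_left two_pos hsum

theorem stmt10 (n₁ n₂ : ℕ) (h₁ : 2 ≤ n₁) (h₂ : 2 ≤ n₂) :
    ∑ i ∈ Finset.Icc 1 (2 ^ (n₁ - 1)),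
        theta (n₁ + n₂) (Finset.univ.filter fun v : Fin (n₁ + n₂) → Bool =>
          gray2 n₁ n₂ v ∈ (Finset.Icc i (i + 2 ^ (n₁ - 1) - 1)) ×ˢ Finset.Icc 1 (2 ^ n₂)) =
      2 ^ (n₁ + n₂ - n₁) * (3 * 2 ^ (2 * n₁ - 3) - 2 ^ (n₁ - 1)) :=
  stmt10_general n₁ n₂ h₁
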